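/- arXiv:1912.09125 — 3 statements merged into one kernel-verified Lean document; each statement's English description precedes it below -/
import Mathlib

section
/- The set { A ∈ [e^{−e}, e^{1/e}] : A is algebraic and the iterated exponential sequence of A converges to an algebraic number } is dense in the interval [e^{−e}, e^{1/e}]. -/
open Real Filter

/-- The iterated exponential sequence of `x`: `iterExp x 0 = x` (i.e. `x₁`),
`iterExp x (n+1) = x ^ (iterExp x n)` (real powers). -/
noncomputable def iterExp (x : ℝ) : ℕ → ℝ
  | 0 => x
  | n + 1 => x ^ iterExp x n

lemma base_ineq {x : ℝ} (hx : 1 < x) : 2 * Real.log x < x - x⁻¹ := by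
  have h0 : (0:ℝ) < x := lt_trans one_pos hx
  have hmono : StrictMonoOn (fun x : ℝ => x - x⁻¹ - 2 * Real.log x) (Set.Ici 1) := by
    apply strictMonoOn_of_deriv_pos (convex_Ici 1)
    · intro y hy
      have hy0 : (0:ℝ) < y := lt_of_lt_of_le one_pos hy
      exact (((continuousAt_id.sub (continuousAt_inv₀ (ne_of_gt hy0))).sub
        ((Real.continuousAt_log (ne_of_gt hy0)).const_smul (2:ℝ)))).continuousWithinAt
    · intro y hy
      rw [interior_Ici] at hy
      have hy0 : (0:ℝ) < y := lt_trans one_pos hy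
      have hd : HasDerivAt (fun x : ℝ => x - x⁻¹ - 2 * Real.log x)
          (1 - (-(y^2)⁻¹) - 2 * y⁻¹) y := by
        exact ((hasDerivAt_id y).sub (hasDerivAt_inv (ne_of_gt hy0))).sub
          ((Real.hasDerivAt_log (ne_of_gt hy0)).const_mul 2)
      rw [hd.deriv]
      have h2 : (y^2)⁻¹ = y⁻¹ * y⁻¹ := by rw [sq, mul_inv]
      have h3 : (1 - y⁻¹)^2 > 0 := by
        have : y⁻¹ < 1 := by rw [inv_lt_one_iff₀]; right; exact hy
        have : 1 - y⁻¹ > 0 := by linarith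
        positivity
      nlinarith [h3]
  have := hmono (Set.self_mem_Ici) (le_of_lt hx) hx
  simp at this
  linarith

lemma E_pos {s : ℝ} (hs : 0 < s) : 0 < Real.exp s - 1 := by
  have : (1:ℝ) < Real.exp s := by
    rw [← Real.exp_zero]; exact Real.exp_lt_exp.mpr hs
  linarith

noncomputable def Fc : ℝ → ℝ := fun s => Real.log s - Real.log (Real.exp s - 1) + s + s / (Real.exp s - 1)

noncomputable def FD : ℝ → ℝ := fun s => s⁻¹ - Real.exp s / (Real.exp s - 1) + 1 +
      (1 * (Real.exp s - 1) - s * Real.exp s) / (Real.exp s - 1)^2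

lemma Fc_hasDeriv {s : ℝ} (hs : 0 < s) : HasDerivAt Fc (FD s) s := by
  have hE : (0:ℝ) < Real.exp s - 1 := E_pos hs
  have hE' : HasDerivAt (fun s : ℝ => Real.exp s - 1) (Real.exp s) s :=
    (Real.hasDerivAt_exp s).sub_const 1
  exact (((Real.hasDerivAt_log (ne_of_gt hs)).sub (hE'.log (ne_of_gt hE))).add
    (hasDerivAt_id s)).add ((hasDerivAt_id s).div hE' (ne_of_gt hE))

lemma Fc_deriv_pos {s : ℝ} (hs : 0 < s) : 0 < FD s := by
  set X := Real.exp (s/2) with hX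
  have hX1 : 1 < X := by
    rw [hX, ← Real.exp_zero]; exact Real.exp_lt_exp.mpr (by linarith)
  have hXsq : Real.exp s = X^2 := by
    rw [hX, sq, ← Real.exp_add]; ring_nf
  have hb := base_ineq hX1
  have hlog : Real.log X = s/2 := by rw [hX, Real.log_exp]
  rw [hlog] at hb
  have hX0 : (0:ℝ) < X := lt_trans one_pos hX1
  have hsX : s * X < X^2 - 1 := by
    have := mul_lt_mul_of_pos_right hb hX0
    have hinv : X⁻¹ * X = 1 := inv_mul_cancel₀ (ne_of_gt hX0)
    nlinarith
  have hE : (0:ℝ) < Real.exp s - 1 := E_pos hs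
  have hkey : s^2 * Real.exp s < (Real.exp s - 1)^2 := by
    rw [hXsq]
    have h1 : 0 < s * X := by positivity
    nlinarith [hsX, h1]
  have heq : FD s = ((Real.exp s - 1)^2 - s^2 * Real.exp s) / (s * (Real.exp s - 1)^2) := by
    unfold FD
    field_simp
    ring
  rw [heq]
  apply div_pos (by linarith) (by positivity)

lemma Fc_mono : StrictMonoOn Fc (Set.Ioi 0) := by
  apply strictMonoOn_of_deriv_pos (convex_Ioi 0)
  · exact fun s hs => (Fc_hasDeriv hs).continuousAt.continuousWithinAt
  · intro s hs
    rw [interior_Ioi] at hs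
    rw [(Fc_hasDeriv hs).deriv]
    exact Fc_deriv_pos hs

lemma Fc_limit : Tendsto Fc (nhdsWithin 0 (Set.Ioi 0)) (nhds 1) := by
  have hslope : Tendsto (fun s : ℝ => (Real.exp s - 1) / s) (nhdsWithin 0 {(0:ℝ)}ᶜ) (nhds 1) := by
    have := hasDerivAt_iff_tendsto_slope.mp (Real.hasDerivAt_exp 0)
    rw [Real.exp_zero] at this
    apply this.congr
    intro s
    simp [slope_def_field]
  have hslope' : Tendsto (fun s : ℝ => (Real.exp s - 1) / s) (nhdsWithin 0 (Set.Ioi 0)) (nhds 1) :=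
    hslope.mono_left (nhdsWithin_mono 0 (fun x hx => ne_of_gt hx))
  have hr : Tendsto (fun s : ℝ => s / (Real.exp s - 1)) (nhdsWithin 0 (Set.Ioi 0)) (nhds 1) := by
    have := hslope'.inv₀ one_ne_zero
    rw [inv_one] at this
    apply this.congr
    intro s
    rw [inv_div]
  have hlog : Tendsto (fun s : ℝ => Real.log (s / (Real.exp s - 1)))
      (nhdsWithin 0 (Set.Ioi 0)) (nhds 0) := by
    have := (Real.continuousAt_log one_ne_zero).tendsto.comp hr
    rwa [Real.log_one] at this
  have hid : Tendsto (fun s : ℝ => s) (nhdsWithin 0 (Set.Ioi 0)) (nhds 0) :=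
    tendsto_id.mono_left nhdsWithin_le_nhds
  have htot := (hlog.add hid).add hr
  rw [add_zero, zero_add] at htot
  apply htot.congr'
  filter_upwards [self_mem_nhdsWithin] with s hs
  have hs0 : (0:ℝ) < s := hs
  unfold Fc
  rw [Real.log_div (ne_of_gt hs0) (ne_of_gt (E_pos hs0))]

lemma Fc_core {t : ℝ} (ht : 0 < t) : 1 ≤ Fc t := by
  apply le_of_tendsto Fc_limit
  filter_upwards [Ioo_mem_nhdsGT_of_mem (Set.mem_Ico.mpr ⟨le_refl 0, ht⟩)] with s hs
  exact le_of_lt (Fc_mono (Set.mem_Ioi.mpr hs.1) (Set.mem_Ioi.mpr (lt_trans hs.1 hs.2)) hs.2)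

lemma key' {A p q : ℝ} (hAe : Real.exp (-Real.exp 1) < A) (hp0 : 0 < p) (hplt : p < q)
    (hq1 : q < 1) (hpq : p = A ^ q) (hqp : q = A ^ p) : False := by
  have hA0 : 0 < A := lt_trans (Real.exp_pos _) hAe
  have hq0 : 0 < q := lt_trans hp0 hplt
  have hp1 : p < 1 := lt_trans hplt hq1
  have hlp : Real.log p = q * Real.log A := by rw [hpq, Real.log_rpow hA0]
  have hlq : Real.log q = p * Real.log A := by rw [hqp, Real.log_rpow hA0]
  obtain ⟨u, hu⟩ : ∃ u, Real.log p = -u := ⟨-Real.log p, by ring⟩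
  obtain ⟨v, hv⟩ : ∃ v, Real.log q = -v := ⟨-Real.log q, by ring⟩
  have hv0 : 0 < v := by have := Real.log_neg hq0 hq1; rw [hv] at this; linarith
  have huv : v < u := by
    have := Real.log_lt_log hp0 hplt; rw [hu, hv] at this; linarith
  have hu0 : 0 < u := lt_trans hv0 huv
  have hpe : Real.exp (-u) = p := by rw [← hu, Real.exp_log hp0]
  have hqe : Real.exp (-v) = q := by rw [← hv, Real.exp_log hq0]
  have hE1 : p * Real.log p = q * Real.log q := by rw [hlp, hlq]; ring
  have hupq : u * p = v * q := by rw [hu, hv] at hE1; linarith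
  have hmul : u * Real.exp v = v * Real.exp u := by
    have h2 := congrArg (fun z : ℝ => z * (Real.exp u * Real.exp v)) hupq
    rw [← hpe, ← hqe] at h2
    have e1 : Real.exp (-u) * Real.exp u = 1 := by rw [← Real.exp_add]; simp
    have e2 : Real.exp (-v) * Real.exp v = 1 := by rw [← Real.exp_add]; simp
    linear_combination h2 - u * Real.exp v * e1 + v * Real.exp u * e2
  obtain ⟨t, ht⟩ : ∃ t, t = u - v := ⟨u - v, rfl⟩
  have ht0 : 0 < t := by rw [ht]; linarith
  have hEt : 0 < Real.exp t - 1 := E_pos ht0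
  have hvE : v * Real.exp t = u := by
    rw [ht, Real.exp_sub]
    field_simp
    linarith [hmul]
  have hvt : v = t / (Real.exp t - 1) := by
    rw [eq_div_iff (ne_of_gt hEt)]
    have h5 : v * (Real.exp t - 1) = v * Real.exp t - v := by ring
    rw [h5, hvE]
    linarith [ht]
  -- log A = -(u * exp v)
  have hlogA : Real.log A = -(u * Real.exp v) := by
    have h3 : Real.exp (-v) * Real.log A = -u := by rw [hqe, ← hu, hlp]
    have := congrArg (fun z : ℝ => z * Real.exp v) h3
    have e2 : Real.exp (-v) * Real.exp v = 1 := by rw [← Real.exp_add]; simp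
    nlinarith [this, e2]
  have hAe' : -Real.exp 1 < Real.log A := by
    have := Real.log_lt_log (Real.exp_pos _) hAe
    rwa [Real.log_exp] at this
  have hlt : u * Real.exp v < Real.exp 1 := by rw [hlogA] at hAe'; linarith
  have hlt1 : Real.log u + v < 1 := by
    have h4 : Real.log (u * Real.exp v) < Real.log (Real.exp 1) :=
      Real.log_lt_log (by positivity) hlt
    rwa [Real.log_mul (ne_of_gt hu0) (ne_of_gt (Real.exp_pos v)), Real.log_exp,
      Real.log_exp] at h4
  -- but log u + v = Fc t ≥ 1
  have hlogu : Real.log u = Real.log t - Real.log (Real.exp t - 1) + t := by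
    rw [← hvE, Real.log_mul (ne_of_gt hv0) (ne_of_gt (Real.exp_pos t)), Real.log_exp,
      hvt, Real.log_div (ne_of_gt ht0) (ne_of_gt hEt)]
  have : Real.log u + v = Fc t := by rw [hlogu, hvt]; unfold Fc; ring
  have := Fc_core ht0
  linarith

lemma logdiv_strictMono : StrictMonoOn (fun x : ℝ => Real.log x / x) (Set.Ioc 0 (Real.exp 1)) := by
  apply strictMonoOn_of_deriv_pos (convex_Ioc 0 (Real.exp 1))
  · intro y hy
    exact ((Real.continuousAt_log (ne_of_gt hy.1)).div continuousAt_id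
      (ne_of_gt hy.1)).continuousWithinAt
  · intro y hy
    rw [interior_Ioc] at hy
    have hy0 : (0:ℝ) < y := hy.1
    have hd : HasDerivAt (fun x : ℝ => Real.log x / x)
        ((y⁻¹ * y - Real.log y * 1) / y ^ 2) y :=
      (Real.hasDerivAt_log (ne_of_gt hy0)).div (hasDerivAt_id y) (ne_of_gt hy0)
    rw [hd.deriv]
    have hlog : Real.log y < 1 := by
      have := Real.log_lt_log hy0 hy.2
      rwa [Real.log_exp] at this
    have : y⁻¹ * y = 1 := inv_mul_cancel₀ (ne_of_gt hy0)
    rw [this]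
    apply div_pos (by linarith) (by positivity)

lemma tendsto_even_odd {f : ℕ → ℝ} {a : ℝ}
    (he : Tendsto (fun n => f (2 * n)) atTop (nhds a))
    (ho : Tendsto (fun n => f (2 * n + 1)) atTop (nhds a)) :
    Tendsto f atTop (nhds a) := by
  rw [Metric.tendsto_atTop] at he ho ⊢
  intro ε hε
  obtain ⟨N₁, h₁⟩ := he ε hε
  obtain ⟨N₂, h₂⟩ := ho ε hε
  refine ⟨2 * N₁ + 2 * N₂ + 1, fun n hn => ?_⟩
  rcases Nat.even_or_odd n with ⟨k, hk⟩ | ⟨k, hk⟩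
  · have : n = 2 * k := by omega
    rw [this]; exact h₁ k (by omega)
  · rw [hk]; exact h₂ k (by omega)

lemma fixed_point {L : ℝ} (hL : 0 < L) : Real.exp (Real.log L / L) ^ L = L := by
  rw [Real.rpow_def_of_pos (Real.exp_pos _), Real.log_exp]
  rw [show Real.log L / L * L = Real.log L by field_simp]
  exact Real.exp_log hL

lemma conv_ge_one {L : ℝ} (h1 : 1 ≤ L) (h2 : L ≤ Real.exp 1) :
    Tendsto (iterExp (Real.exp (Real.log L / L))) atTop (nhds L) := by
  have hL0 : (0:ℝ) < L := lt_of_lt_of_le one_pos h1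
  set A := Real.exp (Real.log L / L) with hA_def
  have hA0 : (0:ℝ) < A := Real.exp_pos _
  have hA1 : 1 ≤ A := by
    rw [hA_def, ← Real.exp_zero]
    exact Real.exp_le_exp.mpr (div_nonneg (Real.log_nonneg h1) hL0.le)
  have hAL : A ^ L = L := fixed_point hL0
  set x := iterExp A with hx_def
  have hx_succ : ∀ n, x (n + 1) = A ^ x n := fun n => rfl
  have hx0 : x 0 = A := rfl
  have hxle : ∀ n, x n ≤ L := by
    intro n
    induction n with
    | zero =>
      rw [hx0]
      calc A ≤ Real.exp (Real.log L) :=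
            Real.exp_le_exp.mpr (div_le_self (Real.log_nonneg h1) h1)
      _ = L := Real.exp_log hL0
    | succ n ih =>
      rw [hx_succ, ← hAL]
      exact Real.rpow_le_rpow_of_exponent_le hA1 ih
  have hmono : Monotone x := by
    apply monotone_nat_of_le_succ
    intro n
    induction n with
    | zero =>
      rw [hx_succ, hx0, ← Real.rpow_one A]
      rw [Real.rpow_one A]  -- undo for exponent spot; just use calc instead
      calc A = A ^ (1:ℝ) := (Real.rpow_one A).symm
      _ ≤ A ^ A := Real.rpow_le_rpow_of_exponent_le hA1 hA1
    | succ n ih =>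
      rw [hx_succ, hx_succ]
      exact Real.rpow_le_rpow_of_exponent_le hA1 ih
  have hbdd : BddAbove (Set.range x) := ⟨L, by rintro y ⟨n, rfl⟩; exact hxle n⟩
  have hconv : Tendsto x atTop (nhds (⨆ n, x n)) := tendsto_atTop_ciSup hmono hbdd
  set L' := ⨆ n, x n with hL'_def
  have hL'1 : 1 ≤ L' := le_trans hA1 (by rw [← hx0]; exact le_ciSup hbdd 0)
  have hL'le : L' ≤ L := ciSup_le hxle
  have hL'0 : (0:ℝ) < L' := lt_of_lt_of_le one_pos hL'1
  have hfix : A ^ L' = L' := by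
    have h5 : Tendsto (fun n => x (n + 1)) atTop (nhds L') :=
      hconv.comp (tendsto_add_atTop_nat 1)
    have h6 : Tendsto (fun n => A ^ x n) atTop (nhds (A ^ L')) :=
      Tendsto.rpow tendsto_const_nhds hconv (Or.inl (ne_of_gt hA0))
    exact tendsto_nhds_unique (h6.congr (fun n => (hx_succ n).symm)) h5
  have heq : L' = L := by
    have hlogL' : Real.log L' = L' * (Real.log L / L) := by
      conv_lhs => rw [← hfix]
      rw [Real.log_rpow hA0, hA_def, Real.log_exp]
    apply logdiv_strictMono.injOn ⟨hL'0, le_trans hL'le h2⟩ ⟨hL0, h2⟩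
    show Real.log L' / L' = Real.log L / L
    rw [hlogL']
    field_simp
  rwa [heq] at hconv

lemma conv_lt_one {L : ℝ} (h1 : (Real.exp 1)⁻¹ < L) (h2 : L < 1) :
    Tendsto (iterExp (Real.exp (Real.log L / L))) atTop (nhds L) := by
  have he1 : (0:ℝ) < (Real.exp 1)⁻¹ := by positivity
  have hL0 : (0:ℝ) < L := lt_trans he1 h1
  have hlogL : Real.log L < 0 := Real.log_neg hL0 h2
  have hlogLgt : -1 < Real.log L := by
    have := Real.log_lt_log he1 h1
    rwa [Real.log_inv, Real.log_exp] at this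
  set A := Real.exp (Real.log L / L) with hA_def
  have hA0 : (0:ℝ) < A := Real.exp_pos _
  have hA1 : A < 1 := by
    rw [hA_def, ← Real.exp_zero]
    exact Real.exp_lt_exp.mpr (div_neg_of_neg_of_pos hlogL hL0)
  have hAe : Real.exp (-Real.exp 1) < A := by
    rw [hA_def]
    apply Real.exp_lt_exp.mpr
    rw [neg_lt, ← neg_div]
    rw [div_lt_iff₀ hL0]
    have hinv : (Real.exp 1)⁻¹ * Real.exp 1 = 1 := inv_mul_cancel₀ (ne_of_gt (Real.exp_pos 1))
    nlinarith [h1, Real.exp_pos 1]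
  have hAL : A ^ L = L := fixed_point hL0
  set x := iterExp A with hx_def
  have hx_succ : ∀ n, x (n + 1) = A ^ x n := fun n => rfl
  have hx0 : x 0 = A := rfl
  have hpos : ∀ n, 0 < x n := by
    intro n; induction n with
    | zero => exact hA0
    | succ n ih => rw [hx_succ]; exact Real.rpow_pos_of_pos hA0 _
  have hle1 : ∀ n, x n ≤ 1 := by
    intro n; induction n with
    | zero => exact le_of_lt hA1
    | succ n ih => rw [hx_succ]; exact Real.rpow_le_one hA0.le hA1.le (hpos n).le
  have hgeA : ∀ n, A ≤ x n := by
    intro n; induction n with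
    | zero => exact le_refl A
    | succ n ih =>
      rw [hx_succ]
      calc A = A ^ (1:ℝ) := (Real.rpow_one A).symm
      _ ≤ A ^ x n := Real.rpow_le_rpow_of_exponent_ge hA0 hA1.le (hle1 n)
  have hanti : ∀ {a b : ℝ}, a ≤ b → A ^ b ≤ A ^ a :=
    fun hab => Real.rpow_le_rpow_of_exponent_ge hA0 hA1.le hab
  have step2 : ∀ n, x (2*n) ≤ x (2*n+2) ∧ x (2*n+3) ≤ x (2*n+1) := by
    intro n; induction n with
    | zero =>
      refine ⟨hgeA 2, ?_⟩
      show x 3 ≤ x 1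
      calc x 3 = A ^ x 2 := hx_succ _
      _ ≤ A ^ x 0 := hanti (hgeA 2)
      _ = x 1 := (hx_succ _).symm
    | succ n ih =>
      have hfirst : x (2*n+2) ≤ x (2*n+4) := by
        calc x (2*n+2) = A ^ x (2*n+1) := hx_succ _
        _ ≤ A ^ x (2*n+3) := hanti ih.2
        _ = x (2*n+4) := (hx_succ _).symm
      have hsecond : x (2*n+5) ≤ x (2*n+3) := by
        calc x (2*n+5) = A ^ x (2*n+4) := hx_succ _
        _ ≤ A ^ x (2*n+2) := hanti hfirst
        _ = x (2*n+3) := (hx_succ _).symm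
      exact ⟨hfirst, hsecond⟩
  have heMono : Monotone (fun n => x (2*n)) := by
    apply monotone_nat_of_le_succ
    intro n
    exact (step2 n).1
  have hoAnti : Antitone (fun n => x (2*n+1)) := by
    apply antitone_nat_of_succ_le
    intro n
    exact (step2 n).2
  have hbddA : BddAbove (Set.range fun n => x (2*n)) :=
    ⟨1, by rintro y ⟨n, rfl⟩; exact hle1 _⟩
  have hbddB : BddBelow (Set.range fun n => x (2*n+1)) :=
    ⟨A, by rintro y ⟨n, rfl⟩; exact hgeA _⟩
  set p := ⨆ n, x (2*n) with hp_def
  set q := ⨅ n, x (2*n+1) with hq_def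
  have hpt : Tendsto (fun n => x (2*n)) atTop (nhds p) := tendsto_atTop_ciSup heMono hbddA
  have hqt : Tendsto (fun n => x (2*n+1)) atTop (nhds q) := tendsto_atTop_ciInf hoAnti hbddB
  have hp0 : 0 < p := lt_of_lt_of_le (hpos 0) (le_ciSup hbddA 0)
  have hp1 : p ≤ 1 := ciSup_le fun n => hle1 _
  have hq0 : 0 < q := lt_of_lt_of_le hA0 (le_ciInf fun n => hgeA _)
  have hq1 : q ≤ 1 := le_trans (ciInf_le hbddB 0) (hle1 1)
  have hgp : A ^ p = q := by
    have h6 : Tendsto (fun n => A ^ x (2*n)) atTop (nhds (A ^ p)) :=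
      Tendsto.rpow tendsto_const_nhds hpt (Or.inl (ne_of_gt hA0))
    have h7 : Tendsto (fun n => x (2*n+1)) atTop (nhds (A ^ p)) :=
      h6.congr fun n => (hx_succ (2*n)).symm
    exact tendsto_nhds_unique h7 hqt
  have hgq : A ^ q = p := by
    have h6 : Tendsto (fun n => A ^ x (2*n+1)) atTop (nhds (A ^ q)) :=
      Tendsto.rpow tendsto_const_nhds hqt (Or.inl (ne_of_gt hA0))
    have h7 : Tendsto (fun n => x (2*n+2)) atTop (nhds (A ^ q)) :=
      h6.congr fun n => (hx_succ (2*n+1)).symm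
    have h8 : Tendsto (fun n => x (2*(n+1))) atTop (nhds p) :=
      hpt.comp (tendsto_add_atTop_nat 1)
    have h9 : Tendsto (fun n => x (2*n+2)) atTop (nhds p) := by
      apply h8.congr
      intro n
      congr 1
    exact tendsto_nhds_unique h7 h9
  have hp1' : p < 1 := by
    rw [← hgq]
    exact Real.rpow_lt_one hA0.le hA1 hq0
  have hq1' : q < 1 := by
    rw [← hgp]
    exact Real.rpow_lt_one hA0.le hA1 hp0
  have hpq : p = q := by
    rcases lt_trichotomy p q with h | h | h
    · exact absurd (key' hAe hp0 h hq1' hgq.symm hgp.symm) not_false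
    · exact h
    · exact absurd (key' hAe hq0 h hp1' hgp.symm hgq.symm) not_false
  have htend : Tendsto x atTop (nhds p) := tendsto_even_odd hpt (hpq ▸ hqt)
  have hfix : A ^ p = p := by rw [hgp, hpq]
  have heq : p = L := by
    have hlogp : Real.log p = p * (Real.log L / L) := by
      conv_lhs => rw [← hfix]
      rw [Real.log_rpow hA0, hA_def, Real.log_exp]
    apply logdiv_strictMono.injOn ⟨hp0, le_trans hp1 (Real.one_le_exp zero_le_one)⟩
      ⟨hL0, le_trans (le_of_lt h2) (Real.one_le_exp zero_le_one)⟩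
    show Real.log p / p = Real.log L / L
    rw [hlogp]
    field_simp
  rwa [heq] at htend

lemma alg_lemma (M : ℚ) (hM : 0 < M) : IsAlgebraic ℚ (Real.exp (Real.log M / M)) := by
  set A := Real.exp (Real.log M / M) with hA_def
  have hM0 : (0:ℝ) < (M:ℝ) := by exact_mod_cast hM
  have hnum : 0 < M.num := Rat.num_pos.mpr hM
  obtain ⟨n, hn_def⟩ : ∃ n : ℕ, n = M.num.toNat := ⟨_, rfl⟩
  have hn0 : 0 < n := by omega
  have hnR : (n:ℝ) = (M:ℝ) * (M.den:ℝ) := by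
    have hden : ((M.den:ℚ)) ≠ 0 := by
      exact_mod_cast M.den_nz
    have h2 : (M.num:ℚ) = M * M.den := by
      rw [show M * (M.den:ℚ) = ((M.num:ℚ) / M.den) * M.den by rw [Rat.num_div_den]]
      rw [div_mul_cancel₀ _ hden]
    have hcast : ((M.num:ℤ):ℝ) = (M:ℝ) * (M.den:ℝ) := by exact_mod_cast h2
    have ht : ((n:ℕ):ℝ) = ((M.num:ℤ):ℝ) := by
      rw [hn_def]; exact_mod_cast congrArg (fun z : ℤ => (z:ℝ)) (Int.toNat_of_nonneg hnum.le)
    rw [ht, hcast]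
  have hpow : A ^ n = (M:ℝ) ^ M.den := by
    rw [hA_def, ← Real.exp_nat_mul]
    have h3 : (n:ℝ) * (Real.log M / M) = (M.den:ℝ) * Real.log M := by
      rw [hnR]; field_simp
    rw [h3, Real.exp_nat_mul, Real.exp_log hM0]
  refine ⟨Polynomial.X ^ n - Polynomial.C (M ^ M.den), ?_, ?_⟩
  · exact Polynomial.X_pow_sub_C_ne_zero hn0 _
  · simp only [map_sub, map_pow, Polynomial.aeval_X, Polynomial.aeval_C]
    rw [hpow]
    simp only [eq_ratCast, Rat.cast_pow]
    ring

lemma rat_alg (M : ℚ) : IsAlgebraic ℚ ((M:ℝ)) := by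
  have := isAlgebraic_algebraMap (R := ℚ) (A := ℝ) M
  simpa [eq_ratCast] using this

lemma log_div_le {y : ℝ} (hy : 0 < y) : Real.log y / y ≤ 1 / Real.exp 1 := by
  rw [div_le_div_iff₀ hy (Real.exp_pos 1)]
  have h := Real.log_le_sub_one_of_pos (show (0:ℝ) < y / Real.exp 1 by positivity)
  rw [Real.log_div (ne_of_gt hy) (ne_of_gt (Real.exp_pos 1)), Real.log_exp] at h
  have hE := Real.exp_pos 1
  have hcancel : y / Real.exp 1 * Real.exp 1 = y := div_mul_cancel₀ _ (ne_of_gt hE)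
  nlinarith [h, hcancel]

lemma log_div_ge {y : ℝ} (hy : (Real.exp 1)⁻¹ < y) : -(Real.exp 1) ≤ Real.log y / y := by
  have hy0 : 0 < y := lt_trans (by positivity) hy
  rw [le_div_iff₀ hy0]
  have h2 : -1 < Real.log y := by
    have := Real.log_lt_log (by positivity) hy
    rwa [Real.log_inv, Real.log_exp] at this
  have h3 : 1 < Real.exp 1 * y := by
    have := (inv_mul_cancel₀ (ne_of_gt (Real.exp_pos 1)))
    nlinarith [Real.exp_pos 1]
  nlinarith

theorem stmt_5 :
    Set.Icc (Real.exp (-Real.exp 1)) (Real.exp (1 / Real.exp 1)) ⊆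
      closure {A : ℝ | A ∈ Set.Icc (Real.exp (-Real.exp 1)) (Real.exp (1 / Real.exp 1)) ∧
        IsAlgebraic ℚ A ∧
        ∃ L : ℝ, Tendsto (iterExp A) atTop (nhds L) ∧ IsAlgebraic ℚ L} := by
  intro x hx
  set a := (Real.exp 1)⁻¹ with ha_def
  set b := Real.exp 1 with hb_def
  have ha0 : (0:ℝ) < a := by positivity
  have hb1 : (1:ℝ) < b := by
    rw [hb_def]; nlinarith [Real.add_one_le_exp 1]
  have ha1 : a < 1 := by
    rw [ha_def]
    rw [inv_lt_one_iff₀]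
    right
    exact hb1
  have hab' : a < b := lt_trans ha1 hb1
  have hab : a ≤ b := le_of_lt hab'
  set f : ℝ → ℝ := fun M => Real.exp (Real.log M / M) with hf_def
  have hfc : ∀ {y : ℝ}, 0 < y → ContinuousAt f y := by
    intro y hy
    exact Real.continuous_exp.continuousAt.comp
      (((Real.continuousAt_log (ne_of_gt hy)).div continuousAt_id (ne_of_gt hy)))
  have hcont : ContinuousOn f (Set.Icc a b) :=
    fun y hy => (hfc (lt_of_lt_of_le ha0 hy.1)).continuousWithinAt
  have hfa : f a = Real.exp (-Real.exp 1) := by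
    rw [hf_def]
    simp only [ha_def]
    rw [Real.log_inv, Real.log_exp]
    congr 1
    field_simp
    rw [hb_def]
  have hfb : f b = Real.exp (1 / Real.exp 1) := by
    rw [hf_def]
    simp only [hb_def]
    rw [Real.log_exp]
  have hIVT := intermediate_value_Icc hab hcont
  rw [hfa, hfb] at hIVT
  obtain ⟨M₀, hM₀mem, hM₀⟩ := hIVT hx
  have hM₀0 : 0 < M₀ := lt_of_lt_of_le ha0 hM₀mem.1
  rw [Metric.mem_closure_iff]
  intro ε hε
  obtain ⟨δ, hδ0, hδ⟩ := Metric.continuousAt_iff.mp (hfc hM₀0) ε hε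
  have hlo_lt_hi : max a (M₀ - δ) < min b (M₀ + δ) := by
    rcases hM₀mem with ⟨h1, h2⟩
    exact max_lt (lt_min hab' (by linarith)) (lt_min (by linarith) (by linarith))
  obtain ⟨r, hr1, hr2⟩ := exists_rat_btwn hlo_lt_hi
  have hra : a < (r:ℝ) := lt_of_le_of_lt (le_max_left _ _) hr1
  have hrb : (r:ℝ) < b := lt_of_lt_of_le hr2 (min_le_left _ _)
  have hr0 : (0:ℝ) < r := lt_trans ha0 hra
  have hrQ : (0:ℚ) < r := by exact_mod_cast hr0
  have hrδ : dist (r:ℝ) M₀ < δ := by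
    rw [Real.dist_eq, abs_lt]
    constructor
    · have := lt_of_le_of_lt (le_max_right a (M₀ - δ)) hr1
      linarith
    · have := lt_of_lt_of_le hr2 (min_le_right b (M₀ + δ))
      linarith
  have hfr : dist (f r) x < ε := by
    rw [← hM₀]
    exact hδ hrδ
  refine ⟨f r, ⟨?_, ?_, ⟨(r:ℝ), ?_, rat_alg r⟩⟩, ?_⟩
  · constructor
    · rw [hf_def]
      exact Real.exp_le_exp.mpr (log_div_ge hra)
    · rw [hf_def]
      exact Real.exp_le_exp.mpr (log_div_le hr0)
  · exact alg_lemma r hrQ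
  · rcases le_or_gt 1 (r:ℝ) with h | h
    · exact conv_ge_one h (le_of_lt hrb)
    · exact conv_lt_one hra h
  · rw [dist_comm]
    exact hfr
end

section
/- Let q be a rational number with 1/e ≤ q ≤ e and let A = q^{1/q}. If the iterated exponential sequence of A converges to a real number L, then L = q. -/
open Real Filter

lemma phi_strictMonoOn : StrictMonoOn (fun x => Real.log x / x) (Set.Ioc 0 (Real.exp 1)) := by
  apply strictMonoOn_of_deriv_pos (convex_Ioc _ _)
  · exact ContinuousOn.div (Real.continuousOn_log.mono (fun x hx => ne_of_gt hx.1))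
      continuousOn_id (fun x hx => ne_of_gt hx.1)
  · intro x hx
    rw [interior_Ioc] at hx
    have hx0 : 0 < x := hx.1
    have hd := (Real.hasDerivAt_log hx0.ne').div (hasDerivAt_id x) hx0.ne'
    simp only [id_eq] at hd
    rw [show deriv (fun x => Real.log x / x) x = _ from hd.deriv]
    have hlog : Real.log x < 1 := by
      have h := Real.log_lt_log hx0 hx.2
      rwa [Real.log_exp] at h
    have h1 : x⁻¹ * x - Real.log x * 1 = 1 - Real.log x := by
      field_simp
    rw [h1]
    exact div_pos (by linarith) (by positivity)

theorem stmt_10 (q : ℚ) (h1 : 1 / Real.exp 1 ≤ (q : ℝ)) (h2 : (q : ℝ) ≤ Real.exp 1)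
    (L : ℝ)
    (hconv : Tendsto (iterExp ((q : ℝ) ^ ((1 : ℝ) / (q : ℝ)))) atTop (nhds L)) :
    L = (q : ℝ) := by
  have hq0 : 0 < (q : ℝ) := lt_of_lt_of_le (by positivity) h1
  set A : ℝ := (q : ℝ) ^ ((1 : ℝ) / (q : ℝ)) with hA
  have hA0 : 0 < A := Real.rpow_pos_of_pos hq0 _
  -- fixed point equation
  have hshift : Tendsto (fun n => iterExp A (n + 1)) atTop (nhds L) :=
    hconv.comp (tendsto_add_atTop_nat 1)
  have hcont : Tendsto (fun n => A ^ iterExp A n) atTop (nhds (A ^ L)) :=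
    (Real.continuousAt_const_rpow hA0.ne').tendsto.comp hconv
  have hfix : A ^ L = L := tendsto_nhds_unique hcont hshift
  have hAq : A ^ (q : ℝ) = (q : ℝ) := by
    rw [hA, ← Real.rpow_mul hq0.le, one_div, inv_mul_cancel₀ hq0.ne', Real.rpow_one]
  -- bounds on L
  have hLmem : L ∈ Set.Ioc 0 (Real.exp 1) := by
    rcases le_or_gt 1 (q : ℝ) with hq1 | hq1
    · have hA1 : 1 ≤ A := Real.one_le_rpow hq1 (by positivity)
      have key : ∀ n, 1 ≤ iterExp A n ∧ iterExp A n ≤ (q : ℝ) := by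
        intro n
        induction n with
        | zero =>
          refine ⟨hA1, ?_⟩
          calc A = (q : ℝ) ^ ((1 : ℝ) / (q : ℝ)) := hA
            _ ≤ (q : ℝ) ^ (1 : ℝ) := by
                apply Real.rpow_le_rpow_of_exponent_le hq1
                rw [div_le_one hq0]; exact hq1
            _ = (q : ℝ) := Real.rpow_one _
        | succ n ih =>
          constructor
          · exact Real.one_le_rpow hA1 (by linarith [ih.1])
          · calc A ^ iterExp A n ≤ A ^ (q : ℝ) :=
                Real.rpow_le_rpow_of_exponent_le hA1 ih.2
              _ = (q : ℝ) := hAq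
      have hL1 : 1 ≤ L := ge_of_tendsto hconv (Eventually.of_forall fun n => (key n).1)
      have hLq : L ≤ (q : ℝ) := le_of_tendsto hconv (Eventually.of_forall fun n => (key n).2)
      exact ⟨by linarith, by linarith⟩
    · have hA1 : A ≤ 1 := Real.rpow_le_one hq0.le hq1.le (by positivity)
      have key : ∀ n, A ≤ iterExp A n ∧ iterExp A n ≤ 1 := by
        intro n
        induction n with
        | zero => exact ⟨le_refl _, hA1⟩
        | succ n ih =>
          constructor
          · calc A = A ^ (1 : ℝ) := (Real.rpow_one _).symm
              _ ≤ A ^ iterExp A n :=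
                Real.rpow_le_rpow_of_exponent_ge hA0 hA1 ih.2
          · exact Real.rpow_le_one hA0.le hA1 (by linarith [ih.1])
      have hLA : A ≤ L := ge_of_tendsto hconv (Eventually.of_forall fun n => (key n).1)
      have hL1 : L ≤ 1 := le_of_tendsto hconv (Eventually.of_forall fun n => (key n).2)
      have he1 : (1 : ℝ) ≤ Real.exp 1 := by linarith [Real.add_one_le_exp (1 : ℝ)]
      exact ⟨lt_of_lt_of_le hA0 hLA, by linarith⟩
  have hqmem : (q : ℝ) ∈ Set.Ioc 0 (Real.exp 1) := ⟨hq0, h2⟩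
  -- equal values of log x / x
  have hphi : Real.log L / L = Real.log (q : ℝ) / (q : ℝ) := by
    have hL0 : 0 < L := hLmem.1
    have hlogL : Real.log L = L * ((1 : ℝ) / (q : ℝ) * Real.log (q : ℝ)) := by
      conv_lhs => rw [← hfix]
      rw [Real.log_rpow hA0, hA, Real.log_rpow hq0]
    rw [hlogL]
    field_simp
  exact phi_strictMonoOn.injOn hLmem hqmem hphi
end

section
/- Let x and y be rational numbers with x > y > 0. Then x^y = y^x (as real powers) if and only if there exists a positive integer v such that x = (1 + 1/v)^{v+1} and y = (1 + 1/v)^v. -/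
lemma pow_gap : ∀ p : ℕ, 2 ≤ p → ∀ b : ℕ, 1 ≤ b → b ^ p + p < (b + 1) ^ p := by
  intro p hp
  induction p, hp using Nat.le_induction with
  | base => intro b hb; nlinarith
  | succ p hp ih =>
    intro b hb
    have h1 := ih b hb
    have h2 : 1 ≤ b ^ p := Nat.one_le_pow _ _ (by omega)
    have e1 : (b + 1) ^ (p + 1) = (b + 1) ^ p * (b + 1) := pow_succ _ _
    have e2 : b ^ (p + 1) = b ^ p * b := pow_succ _ _
    nlinarith

theorem stmt_14 (x y : ℚ) (hy : 0 < y) (hxy : y < x) :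
    (x : ℝ) ^ (y : ℝ) = (y : ℝ) ^ (x : ℝ) ↔
      ∃ v : ℕ, 0 < v ∧ x = (1 + 1 / (v : ℚ)) ^ (v + 1) ∧ y = (1 + 1 / (v : ℚ)) ^ v := by
  have hx : (0:ℚ) < x := hy.trans hxy
  have hy' : (0:ℝ) < (y:ℝ) := by exact_mod_cast hy
  have hx' : (0:ℝ) < (x:ℝ) := by exact_mod_cast hx
  constructor
  · intro h
    set t : ℚ := x / y with htdef
    have ht1 : 1 < t := (one_lt_div hy).2 hxy
    have ht0 : 0 < t := zero_lt_one.trans ht1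
    set r : ℚ := t - 1 with hrdef
    have hr0 : 0 < r := sub_pos.2 ht1
    have hrnum : 0 < r.num := Rat.num_pos.2 hr0
    set p : ℕ := r.num.natAbs with hpdef
    set q : ℕ := r.den with hqdef
    have hp0 : 0 < p := Int.natAbs_pos.2 (ne_of_gt hrnum)
    have hq0 : 0 < q := r.pos
    have hpz : (p:ℤ) = r.num := Int.natAbs_of_nonneg hrnum.le
    have hcop : Nat.Coprime p q := r.reduced
    have hq' : ((q:ℚ)) ≠ 0 := by exact_mod_cast hq0.ne'
    have hxt : (x:ℝ) = (t:ℝ) * y := by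
      rw [htdef]; push_cast; field_simp
    have hlog : (y:ℝ) * Real.log x = (x:ℝ) * Real.log y := by
      have := congrArg Real.log h
      rwa [Real.log_rpow hx', Real.log_rpow hy'] at this
    have ht0' : (0:ℝ) < (t:ℝ) := by exact_mod_cast ht0
    have hlt : Real.log t = ((t:ℝ) - 1) * Real.log y := by
      rw [hxt, Real.log_mul (ne_of_gt ht0') (ne_of_gt hy')] at hlog
      apply mul_left_cancel₀ (ne_of_gt hy')
      linear_combination hlog
    have hty : (t:ℝ) = (y:ℝ) ^ ((t:ℝ) - 1) := by
      rw [Real.rpow_def_of_pos hy', mul_comm, ← hlt, Real.exp_log ht0']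
    have key : t ^ q = y ^ p := by
      have h1 : ((t:ℝ)) ^ q = (y:ℝ) ^ p := by
        rw [hty, ← Real.rpow_natCast ((y:ℝ) ^ ((t:ℝ)-1 : ℝ)) q, ← Real.rpow_natCast (y:ℝ) p,
          ← Real.rpow_mul hy'.le]
        congr 1
        have h2 : r * (q:ℚ) = (p:ℚ) := by
          rw [hqdef, Rat.mul_den_eq_num]
          exact_mod_cast hpz.symm
        have h3 : ((t:ℝ) - 1) * (q:ℝ) = ((r * q : ℚ) : ℝ) := by push_cast [hrdef]; ring
        rw [h3, h2]; push_cast; ring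
      exact_mod_cast h1
    obtain ⟨c, hyc, htc⟩ : ∃ c : ℚ, y = c ^ q ∧ t = c ^ p :=
      (pow_eq_pow_iff_of_coprime hcop).1 key.symm
    have hc0 : 0 < c := by
      rcases lt_trichotomy c 0 with hneg | rfl | hpos
      · exfalso
        rcases Nat.even_or_odd q with hqe | hqo
        · have hpodd : Odd p := by
            rcases Nat.even_or_odd p with hpe | hpo
            · exfalso
              have h2 : (2:ℕ) ∣ 1 := hcop ▸ Nat.dvd_gcd hpe.two_dvd hqe.two_dvd
              omega
            · exact hpo
          have : t < 0 := htc ▸ hpodd.pow_neg hneg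
          linarith
        · have : y < 0 := hyc ▸ hqo.pow_neg hneg
          linarith
      · rw [zero_pow hq0.ne'] at hyc; exact absurd hyc (ne_of_gt hy)
      · exact hpos
    -- num and den of t
    have hcopt : Nat.Coprime (r.num + (q:ℤ)).natAbs ((q:ℤ)).natAbs := by
      have : (r.num + (q:ℤ)).natAbs = p + q := by omega
      rw [this, Int.natAbs_natCast]
      exact Nat.coprime_add_self_left.2 hcop
    have htval : t = ((r.num + (q:ℤ) : ℤ) : ℚ) / (((q:ℤ)) : ℚ) := by
      have h4 : t = r + 1 := by rw [hrdef]; ring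
      rw [h4]
      conv_lhs => rw [← Rat.num_div_den r]
      push_cast [hqdef]
      field_simp
    have hqz0 : (0:ℤ) < (q:ℤ) := by exact_mod_cast hq0
    have htnum : t.num = r.num + (q:ℤ) := by
      rw [htval]; exact Rat.num_div_eq_of_coprime hqz0 hcopt
    have htden : ((t.den):ℤ) = (q:ℤ) := by
      rw [htval]; exact Rat.den_div_eq_of_coprime hqz0 hcopt
    -- c-based equations
    have hcn : c.num ^ p = r.num + (q:ℤ) := by
      rw [← htnum, htc, Rat.num_pow]
    have hcd : c.den ^ p = q := by
      have h5 : t.den = c.den ^ p := by rw [htc, Rat.den_pow]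
      omega
    have hcnum0 : 0 < c.num := Rat.num_pos.2 hc0
    set a : ℕ := c.num.natAbs with hadef
    have haz : (a:ℤ) = c.num := Int.natAbs_of_nonneg hcnum0.le
    set b : ℕ := c.den with hbdef
    have hb1 : 1 ≤ b := c.pos
    have han : (a:ℤ) ^ p = (p:ℤ) + (q:ℤ) := by rw [haz, hcn, ← hpz]
    have hanat : a ^ p = p + q := by exact_mod_cast han
    have hp1 : p = 1 := by
      by_contra hne
      have hp2 : 2 ≤ p := by omega
      have hbp : b ^ p = q := hcd
      have hba : b < a := by
        have h6 : b ^ p < a ^ p := by omega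
        exact (Nat.pow_lt_pow_iff_left hp0.ne').1 h6
      have hgap := pow_gap p hp2 b hb1
      have h7 : (b+1)^p ≤ a^p := Nat.pow_le_pow_left (by omega) p
      omega
    have hrnum1 : r.num = 1 := by rw [← hpz, hp1]; norm_num
    have hct : c = t := by rw [htc, hp1, pow_one]
    have htq : t = 1 + 1/(q:ℚ) := by
      have h8 : r = 1/(q:ℚ) := by
        conv_lhs => rw [← Rat.num_div_den r]
        rw [hrnum1, ← hqdef]
        norm_num
      rw [hrdef] at h8; linarith
    have hyq : y = t ^ q := by rw [hyc, hct]
    have hxq : x = t ^ (q+1) := by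
      have hxy' : x = t * y := by rw [htdef]; field_simp
      rw [hxy', hyq, pow_succ]; ring
    exact ⟨q, hq0, by rw [hxq, htq], by rw [hyq, htq]⟩
  · rintro ⟨v, hv, hxv, hyv⟩
    have hv' : ((v:ℚ)) ≠ 0 := Nat.cast_ne_zero.2 hv.ne'
    have hkey : y * ((v:ℚ)+1) = x * v := by
      rw [hxv, hyv, pow_succ]; field_simp
    rw [Real.rpow_def_of_pos hx', Real.rpow_def_of_pos hy']
    congr 1
    have hlx : Real.log x = ((v:ℝ)+1) * Real.log ((1:ℝ) + 1/(v:ℝ)) := by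
      rw [hxv]; push_cast [Real.log_pow]; ring
    have hly : Real.log y = (v:ℝ) * Real.log ((1:ℝ) + 1/(v:ℝ)) := by
      rw [hyv]; push_cast [Real.log_pow]; ring
    have hkeyR : (y:ℝ) * ((v:ℝ)+1) = (x:ℝ) * (v:ℝ) := by exact_mod_cast hkey
    rw [hlx, hly]
    linear_combination Real.log ((1:ℝ) + 1/(v:ℝ)) * hkeyR
end
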